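/- Let X be a finite set of 𝒟-sets that is a proper cover of 𝒯. Then |⋃_{Y ∈ X} Y^Ind| ≤ |X| − 1. -/
import Mathlib


noncomputable section

/-- 𝒯 = ∏_{n∈ℕ} [2^n]  (the paper's index `n ∈ {1,2,…}` is the Lean index `n+1`). -/
abbrev Tal : Type := (n : ℕ) → Fin (2 ^ (n + 1))

/-- `S_{n,τ} = {f ∈ 𝒯 : f(n) ≠ τ}`. -/
def Sset (n : ℕ) (τ : Fin (2 ^ (n + 1))) : Set Tal := {f | f n ≠ τ}

/-- The 𝒟-set `⋂_{n ∈ I} S_{n, t n}` with (nonempty, finite) index set `I`;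
only the values of `t` on `I` matter. -/
def DSet (I : Finset ℕ) (t : (n : ℕ) → Fin (2 ^ (n + 1))) : Set Tal :=
  {f | ∀ n ∈ I, f n ≠ t n}

/-- `η(k) = 2^{2500 k⁴}`. -/
def ηT (k : ℕ) : ℕ := 2 ^ (2500 * k ^ 4)

/-- `α(k) = (k+5)^{-3}`. -/
def αT (k : ℕ) : ℝ := (((k : ℝ) + 5) ^ 3)⁻¹

/-- `δ(m) = min {n ∈ ℕ : η(n) ≥ m}` (with `ℕ = {1,2,…}`). -/
def δT (m : ℕ) : ℕ := sInf {n : ℕ | 1 ≤ n ∧ m ≤ ηT n}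

/-- `w(n) = 2^{-δ(n)} (η(δ(n))/n)^{α(δ(n))}`. -/
def wT (n : ℕ) : ℝ :=
  (2 : ℝ) ^ (-(δT n : ℤ)) * ((ηT (δT n) : ℝ) / (n : ℝ)) ^ (αT (δT n))

/-- Membership in Talagrand's family 𝒟 for a triple `(X, I, w)`:  for some `k ∈ {1,2,…}`,
`X` is a 𝒟-set with index set `I`, `1 ≤ |I| ≤ η(k)`, and `w = 2^{-k}(η(k)/|I|)^{α(k)}`. -/
def memD (p : Set Tal × Finset ℕ × ℝ) : Prop :=
  ∃ k : ℕ, 1 ≤ k ∧ (∃ t : (n : ℕ) → Fin (2 ^ (n + 1)), p.1 = DSet p.2.1 t) ∧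
    p.2.1.Nonempty ∧ p.2.1.card ≤ ηT k ∧
    p.2.2 = (2 : ℝ) ^ (-(k : ℤ)) * ((ηT k : ℝ) / (p.2.1.card : ℝ)) ^ (αT k)

/-- Talagrand's first pathological submeasure:
`ψ(B) = inf { w(Y) : Y ⊆ 𝒟 finite, B ⊆ ⋃ Y }`. -/
def ψT (B : Set Tal) : ℝ :=
  sInf {r : ℝ | ∃ Y : Finset (Set Tal × Finset ℕ × ℝ), (∀ p ∈ Y, memD p) ∧
    B ⊆ (⋃ p ∈ Y, p.1) ∧ r = ∑ p ∈ Y, p.2.2}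

end

/-- If a finite set of `M` distinct 𝒟-sets (here given by index sets
`I i` and defining values `t i`) is a proper cover of 𝒯, then
`|⋃_i (X_i)^Ind| ≤ M − 1`. -/
theorem statement8 (M : ℕ)
    (I : Fin M → Finset ℕ) (t : Fin M → (n : ℕ) → Fin (2 ^ (n + 1)))
    (hne : ∀ i, (I i).Nonempty)
    (hdistinct : Function.Injective (fun i : Fin M => DSet (I i) (t i)))
    (hcover : (⋃ i : Fin M, DSet (I i) (t i)) = Set.univ)
    (hproper : ∀ s : Finset (Fin M), s ≠ Finset.univ →
      ¬ (Set.univ ⊆ ⋃ i ∈ s, DSet (I i) (t i))) :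
    (Finset.univ.biUnion I).card ≤ M - 1 := by
  classical
  -- a default element of 𝒯
  have g₀ : Tal := fun n => ⟨0, by positivity⟩
  -- key lemma: if some g "hits" every i ∈ S, and there is a system of distinct
  -- representatives for {I i \ ⋃_{j∈S} I j : i ∉ S}, then we contradict the cover.
  have key : ∀ (S : Finset (Fin M)) (g : Tal),
      (∀ i ∈ S, ∃ n ∈ I i, g n = t i n) →
      (∀ s : Finset {i : Fin M // i ∉ S},
        s.card ≤ (s.biUnion (fun i => I i.val \ S.biUnion I)).card) →
      False := by
    intro S g hg hall
    obtain ⟨r, rinj, rmem⟩ :=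
      (Finset.all_card_le_biUnion_card_iff_exists_injective
        (fun i : {i : Fin M // i ∉ S} => I i.val \ S.biUnion I)).mp hall
    set J := S.biUnion I with hJ
    set f : Tal := fun n =>
      if n ∈ J then g n else if h : ∃ i, r i = n then t (h.choose).val n else g n with hf
    have hhit : ∀ i : Fin M, ∃ n ∈ I i, f n = t i n := by
      intro i
      by_cases hi : i ∈ S
      · obtain ⟨n, hn, hgn⟩ := hg i hi
        have hnJ : n ∈ J := Finset.mem_biUnion.mpr ⟨i, hi, hn⟩
        exact ⟨n, hn, by simp [hf, hnJ, hgn]⟩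
      · have hri := rmem ⟨i, hi⟩
        set n := r ⟨i, hi⟩ with hn
        have hnI : n ∈ I i := (Finset.mem_sdiff.mp hri).1
        have hnJ : n ∉ J := (Finset.mem_sdiff.mp hri).2
        refine ⟨n, hnI, ?_⟩
        have hex : ∃ i', r i' = n := ⟨⟨i, hi⟩, rfl⟩
        have hch : hex.choose = ⟨i, hi⟩ := rinj (hex.choose_spec.trans hn)
        show (if n ∈ J then g n else if h : ∃ i', r i' = n then t (h.choose).val n else g n)
          = t i n
        rw [if_neg hnJ, dif_pos hex, hch]
    have hfmem : f ∈ ⋃ i : Fin M, DSet (I i) (t i) := hcover ▸ Set.mem_univ f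
    obtain ⟨i, hi⟩ := Set.mem_iUnion.mp hfmem
    obtain ⟨n, hn, hfn⟩ := hhit i
    exact hi n hn hfn
  -- deficiency function; pick a maximizer
  set d : Finset (Fin M) → ℤ := fun s => (s.card : ℤ) - ((s.biUnion I).card : ℤ) with hd
  obtain ⟨S, -, hS⟩ := Finset.exists_max_image (Finset.univ : Finset (Finset (Fin M))) d
    ⟨∅, Finset.mem_univ ∅⟩
  have hS' : ∀ s : Finset (Fin M), d s ≤ d S := fun s => hS s (Finset.mem_univ s)
  -- Step 1: d S ≥ 1
  have hd1 : 1 ≤ d S := by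
    by_contra h
    push_neg at h
    have hall : ∀ s : Finset {i : Fin M // i ∉ (∅ : Finset (Fin M))},
        s.card ≤ (s.biUnion (fun i => I i.val \ (∅ : Finset (Fin M)).biUnion I)).card := by
      intro s
      have hbi : s.biUnion (fun i => I i.val \ (∅ : Finset (Fin M)).biUnion I)
          = (s.image Subtype.val).biUnion I := by
        ext n
        simp [Finset.mem_biUnion, Finset.mem_image]
      have hc : (s.image Subtype.val).card = s.card :=
        Finset.card_image_of_injective _ Subtype.val_injective
      have := hS' (s.image Subtype.val)
      rw [hbi, ← hc]
      simp only [hd] at this h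
      omega
    exact key ∅ g₀ (by simp) hall
  -- Step 2: Hall's condition for the family {I i \ J : i ∉ S}
  set J := S.biUnion I with hJ
  have hallS : ∀ s : Finset {i : Fin M // i ∉ S},
      s.card ≤ (s.biUnion (fun i => I i.val \ J)).card := by
    intro s
    by_contra hlt
    push_neg at hlt
    set T := s.image Subtype.val with hT
    have hTcard : T.card = s.card := Finset.card_image_of_injective _ Subtype.val_injective
    have hdisj : Disjoint S T := by
      rw [Finset.disjoint_right]
      intro a haT haS
      obtain ⟨b, -, hb⟩ := Finset.mem_image.mp haT
      exact b.2 (hb ▸ haS)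
    have hsub : (S ∪ T).biUnion I ⊆ J ∪ s.biUnion (fun i => I i.val \ J) := by
      intro n hn
      obtain ⟨i, hiST, hni⟩ := Finset.mem_biUnion.mp hn
      rcases Finset.mem_union.mp hiST with hiS | hiT
      · exact Finset.mem_union_left _ (Finset.mem_biUnion.mpr ⟨i, hiS, hni⟩)
      · by_cases hnJ : n ∈ J
        · exact Finset.mem_union_left _ hnJ
        · obtain ⟨b, hbs, hb⟩ := Finset.mem_image.mp hiT
          refine Finset.mem_union_right _ (Finset.mem_biUnion.mpr ⟨b, hbs, ?_⟩)
          exact Finset.mem_sdiff.mpr ⟨hb ▸ hni, hnJ⟩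
    have hcard1 : ((S ∪ T).biUnion I).card ≤ J.card + (s.biUnion (fun i => I i.val \ J)).card :=
      (Finset.card_le_card hsub).trans (Finset.card_union_le _ _)
    have hcard2 : (S ∪ T).card = S.card + s.card := by
      rw [Finset.card_union_of_disjoint hdisj, hTcard]
    have := hS' (S ∪ T)
    simp only [hd] at this
    rw [hcard2, ← hJ] at this
    omega
  -- Step 3: the subfamily indexed by S covers 𝒯
  have hcov' : Set.univ ⊆ ⋃ i ∈ S, DSet (I i) (t i) := by
    intro g _
    by_contra hg
    apply key S g ?_ hallS
    intro i hiS
    have : g ∉ DSet (I i) (t i) := fun hmem =>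
      hg (Set.mem_biUnion hiS hmem)
    simp only [DSet, Set.mem_setOf_eq] at this
    push_neg at this
    exact this
  have hSuniv : S = Finset.univ := by
    by_contra h
    exact hproper S h hcov'
  rw [hSuniv] at hd1
  simp only [hd, Finset.card_univ, Fintype.card_fin] at hd1
  omega
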